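/- For all real numbers a and b, ∫_{-∞}^{∞} t² φ(t) Φ(a + b t) dt = Φ(a/√(1 + b²)) − (a b²/(1 + b²)^{3/2}) φ(a/√(1 + b²)). -/

import Mathlib

open MeasureTheory Set

/-- Standard normal density. -/
noncomputable def phi (t : ℝ) : ℝ := Real.exp (-(t ^ 2) / 2) / Real.sqrt (2 * Real.pi)

/-- Standard normal cumulative distribution function. -/
noncomputable def Phi (x : ℝ) : ℝ := ∫ t in Set.Iic x, phi t

/-!
Write `Φ(a + b t) = ∫_{s ≤ a} φ(s + b t) ds` and exchange the order of integration.
With `r = √(1 + b²)`, completing the square gives `φ(t) φ(s + b t) = φ(s/r) φ(r t + b s/r)`,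
so the inner integral over `t` is a second moment of a Gaussian, `φ(s/r) (1 + b² (s/r)²) / r³`.
After the substitution `s = r u` the outer integral reduces to
`∫_{u ≤ a/r} u² φ(u) du = Φ(a/r) - (a/r) φ(a/r)`, which holds because
`(u φ(u))' = φ(u) - u² φ(u)`.
-/

open scoped NNReal

namespace ProbabilityTheory

variable {m : ℝ} {v : ℝ≥0}

lemma integrable_gaussianReal_iff {E : Type*} [NormedAddCommGroup E] [NormedSpace ℝ E]
    (hv : v ≠ 0) {g : ℝ → E} :
    Integrable g (gaussianReal m v) ↔ Integrable (fun x ↦ gaussianPDFReal m v x • g x) := by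
  rw [gaussianReal_of_var_ne_zero _ hv, integrable_withDensity_iff_integrable_smul'
    (measurable_gaussianPDF _ _) (ae_of_all _ fun _ ↦ gaussianPDF_lt_top)]
  simp [toReal_gaussianPDF]

lemma integrable_pow_mul_gaussianPDFReal (hv : v ≠ 0) (n : ℕ) :
    Integrable (fun x ↦ x ^ n * gaussianPDFReal m v x) := by
  have h : Integrable (fun x : ℝ ↦ x ^ n) (gaussianReal m v) := by
    rw [← integrable_norm_iff (by fun_prop)]
    simpa using (memLp_id_gaussianReal (μ := m) (v := v) n).integrable_norm_pow'
  simpa only [smul_eq_mul, mul_comm] using (integrable_gaussianReal_iff hv).1 h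

lemma integral_sq_mul_gaussianPDFReal (hv : v ≠ 0) :
    ∫ x, x ^ 2 * gaussianPDFReal m v x = v + m ^ 2 := by
  have h := variance_eq_sub (memLp_id_gaussianReal (μ := m) (v := v) 2)
  rw [variance_id_gaussianReal, show ∫ x, id x ∂gaussianReal m v = m from
    integral_id_gaussianReal, integral_gaussianReal_eq_integral_smul hv] at h
  simp only [Pi.pow_apply, id_eq, smul_eq_mul] at h
  simp_rw [mul_comm _ (gaussianPDFReal m v _)]
  linarith

end ProbabilityTheory

open ProbabilityTheory Filter Topology

lemma phi_eq_gaussianPDFReal : phi = gaussianPDFReal 0 1 := by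
  ext t
  simp [phi, gaussianPDFReal, div_eq_inv_mul]

lemma phi_nonneg (t : ℝ) : 0 ≤ phi t := by
  rw [phi_eq_gaussianPDFReal]; exact gaussianPDFReal_nonneg _ _ _

@[fun_prop]
lemma continuous_phi : Continuous phi := by
  unfold phi; fun_prop

lemma integrable_pow_mul_phi (n : ℕ) : Integrable (fun t ↦ t ^ n * phi t) := by
  simpa [phi_eq_gaussianPDFReal] using integrable_pow_mul_gaussianPDFReal (m := 0) one_ne_zero n

lemma integrable_phi : Integrable phi := by
  simpa using integrable_pow_mul_phi 0

lemma hasDerivAt_phi (t : ℝ) : HasDerivAt phi (-t * phi t) t := by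
  have h := (((hasDerivAt_pow 2 t).neg.div_const 2).exp).div_const (Real.sqrt (2 * Real.pi))
  refine h.congr_deriv ?_
  simp only [phi, Pi.neg_apply]
  push_cast
  ring

lemma integral_Iic_sq_mul_phi (m : ℝ) : ∫ u in Iic m, u ^ 2 * phi u = Phi m - m * phi m := by
  have hderiv (u : ℝ) : HasDerivAt (fun u ↦ u * phi u) (phi u - u ^ 2 * phi u) u := by
    refine ((hasDerivAt_id' u).mul (hasDerivAt_phi u)).congr_deriv ?_
    ring
  have hint : Integrable (fun u ↦ phi u - u ^ 2 * phi u) :=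
    integrable_phi.sub (integrable_pow_mul_phi 2)
  have hbot : Tendsto (fun u ↦ u * phi u) atBot (𝓝 0) :=
    tendsto_zero_of_hasDerivAt_of_integrableOn_Iic (a := 0) (fun u _ ↦ hderiv u)
      hint.integrableOn (by simpa using (integrable_pow_mul_phi 1).integrableOn)
  have h := integral_Iic_of_hasDerivAt_of_tendsto' (a := m) (fun u _ ↦ hderiv u)
    hint.integrableOn hbot
  rw [integral_sub integrable_phi.integrableOn (integrable_pow_mul_phi 2).integrableOn,
    sub_zero] at h
  rw [Phi]
  linarith

lemma Phi_add_eq_setIntegral_Iic (x y : ℝ) : Phi (x + y) = ∫ s in Iic x, phi (s + y) := by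
  rw [Phi, ← (measurePreserving_add_right volume y).setIntegral_preimage_emb
    (measurableEmbedding_addRight y), preimage_add_const_Iic, add_sub_cancel_right]

lemma setIntegral_Iic_comp_div {E : Type*} [NormedAddCommGroup E] [NormedSpace ℝ E]
    (g : ℝ → E) {r : ℝ} (hr : 0 < r) (a : ℝ) :
    ∫ s in Iic a, g (s / r) = r • ∫ u in Iic (a / r), g u := by
  have h := Measure.setIntegral_comp_smul_of_pos volume g (Iic a) (inv_pos.2 hr)
  simp only [smul_eq_mul, Module.finrank_self, pow_one, inv_inv,
    LinearOrderedField.smul_Iic (inv_pos.2 hr)] at h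
  simp_rw [div_eq_inv_mul]
  exact h

lemma phi_mul_add {r : ℝ} (hr : r ≠ 0) (c t : ℝ) :
    phi (r * t + c) = |r|⁻¹ * gaussianPDFReal (-c / r) (Real.nnabs r ^ 2)⁻¹ t := by
  rw [phi_eq_gaussianPDFReal, gaussianPDFReal_add, gaussianPDFReal_mul hr, abs_inv]
  congr 2
  · ring
  · ext; simp

lemma integrable_sq_mul_phi_mul_add {r : ℝ} (hr : r ≠ 0) (c : ℝ) :
    Integrable (fun t ↦ t ^ 2 * phi (r * t + c)) := by
  simp_rw [phi_mul_add hr, mul_left_comm (_ ^ 2)]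
  exact (integrable_pow_mul_gaussianPDFReal (by simpa using hr) 2).const_mul _

lemma integral_sq_mul_phi_mul_add {r : ℝ} (hr : r ≠ 0) (c : ℝ) :
    ∫ t, t ^ 2 * phi (r * t + c) = (1 + c ^ 2) / |r| ^ 3 := by
  simp_rw [phi_mul_add hr, mul_left_comm (_ ^ 2)]
  rw [integral_const_mul, integral_sq_mul_gaussianPDFReal (by simpa using hr)]
  push_cast
  simp only [div_pow, ← sq_abs r]
  field_simp

lemma phi_mul_phi_add_mul (b s t : ℝ) :
    phi t * phi (s + b * t)
      = phi (s / √(1 + b ^ 2)) * phi (√(1 + b ^ 2) * t + b * s / √(1 + b ^ 2)) := by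
  have hr : 0 < √(1 + b ^ 2) := Real.sqrt_pos.2 (by positivity)
  have hr2 : √(1 + b ^ 2) ^ 2 = 1 + b ^ 2 := Real.sq_sqrt (by positivity)
  unfold phi
  rw [div_mul_div_comm, div_mul_div_comm, ← Real.exp_add, ← Real.exp_add]
  congr 2
  field_simp
  rw [hr2]
  ring

lemma integrable_sq_mul_phi_mul_phi_add_mul (b s : ℝ) :
    Integrable (fun t ↦ t ^ 2 * phi t * phi (s + b * t)) := by
  have hr : √(1 + b ^ 2) ≠ 0 := (Real.sqrt_pos.2 (by positivity)).ne'
  simp_rw [mul_assoc, phi_mul_phi_add_mul, mul_left_comm (_ ^ 2)]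
  exact (integrable_sq_mul_phi_mul_add hr _).const_mul _

lemma integral_sq_mul_phi_mul_phi_add_mul (b s : ℝ) :
    ∫ t, t ^ 2 * phi t * phi (s + b * t)
      = (phi (s / √(1 + b ^ 2)) + b ^ 2 * ((s / √(1 + b ^ 2)) ^ 2 * phi (s / √(1 + b ^ 2))))
        / √(1 + b ^ 2) ^ 3 := by
  have hr : 0 < √(1 + b ^ 2) := Real.sqrt_pos.2 (by positivity)
  conv_lhs => enter [2, t]; rw [mul_assoc, phi_mul_phi_add_mul, mul_left_comm]
  rw [integral_const_mul, integral_sq_mul_phi_mul_add hr.ne', abs_of_pos hr]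
  field_simp

lemma integrable_prod_sq_mul_phi_mul_phi_add_mul (b a : ℝ) :
    Integrable (Function.uncurry fun t s ↦ t ^ 2 * phi t * phi (s + b * t))
      (volume.prod (volume.restrict (Iic a))) := by
  have hr : 0 < √(1 + b ^ 2) := Real.sqrt_pos.2 (by positivity)
  have hnonneg (t s : ℝ) : 0 ≤ t ^ 2 * phi t * phi (s + b * t) := by
    have := phi_nonneg t; have := phi_nonneg (s + b * t); positivity
  rw [integrable_prod_iff' (by unfold Function.uncurry; fun_prop)]
  refine ⟨ae_of_all _ fun s ↦ integrable_sq_mul_phi_mul_phi_add_mul b s, ?_⟩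
  simp only [Function.uncurry_apply_pair, Real.norm_of_nonneg (hnonneg _ _),
    integral_sq_mul_phi_mul_phi_add_mul]
  refine (Integrable.div_const ?_ _).integrableOn
  exact (integrable_phi.comp_div hr.ne').add
    (((integrable_pow_mul_phi 2).comp_div hr.ne').const_mul _)

theorem gaussian_cdf_second_moment (a b : ℝ) :
    ∫ t : ℝ, t ^ 2 * phi t * Phi (a + b * t)
      = Phi (a / Real.sqrt (1 + b ^ 2))
        - (a * b ^ 2 / (1 + b ^ 2) ^ ((3 : ℝ) / 2)) * phi (a / Real.sqrt (1 + b ^ 2)) := by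
  set r := √(1 + b ^ 2)
  have hr : 0 < r := Real.sqrt_pos.2 (by positivity)
  have hr2 : r ^ 2 = 1 + b ^ 2 := Real.sq_sqrt (by positivity)
  have hr3 : (1 + b ^ 2) ^ ((3 : ℝ) / 2) = r ^ 3 := by
    rw [Real.rpow_div_two_eq_sqrt _ (by positivity)]
    norm_cast
  calc ∫ t, t ^ 2 * phi t * Phi (a + b * t)
      = ∫ t, ∫ s in Iic a, t ^ 2 * phi t * phi (s + b * t) := by
        simp_rw [Phi_add_eq_setIntegral_Iic, integral_const_mul]
    _ = ∫ s in Iic a, ∫ t, t ^ 2 * phi t * phi (s + b * t) :=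
        integral_integral_swap (integrable_prod_sq_mul_phi_mul_phi_add_mul b a)
    _ = r * ∫ u in Iic (a / r), (phi u + b ^ 2 * (u ^ 2 * phi u)) / r ^ 3 := by
        simp_rw [integral_sq_mul_phi_mul_phi_add_mul]
        exact setIntegral_Iic_comp_div (fun u ↦ (phi u + b ^ 2 * (u ^ 2 * phi u)) / r ^ 3) hr a
    _ = r * ((Phi (a / r) + b ^ 2 * (Phi (a / r) - a / r * phi (a / r))) / r ^ 3) := by
        rw [integral_div, integral_add integrable_phi.integrableOn
          ((integrable_pow_mul_phi 2).const_mul _).integrableOn, integral_const_mul,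
          integral_Iic_sq_mul_phi, Phi]
    _ = _ := by
        rw [hr3]
        field_simp
        linear_combination -(r * Phi (a / r)) * hr2
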